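/- arXiv:1812.01482 — 2 statements merged into one kernel-verified Lean document; each statement's English description precedes it below -/
import Mathlib

section
/- Let G be a finite simple undirected graph with threshold function τ : V(G) → ℕ satisfying τ(v) ≤ deg(v) for every vertex v. Let C = {v₁, …, v_t} be a vertex cover of G and B = V(G) \ C. Let T : C → ℕ be any function, and extend T to B by setting, for u ∈ B, T(u) = 1 + min{x ∈ ℕ : |{c ∈ N(u) : T(c) ≤ x}| ≥ τ(u)}. For each i ∈ {1,…,t} define Sᵢ = {w ∈ N(vᵢ) ∩ B : T(w) ≥ T(vᵢ)} and lᵢ = max(0, τ(vᵢ) − |{w ∈ N(vᵢ) : T(w) < T(vᵢ)}|). If H ⊆ B satisfies |H ∩ Sᵢ| ≥ lᵢ for every i ∈ {1,…,t}, then H ∪ {v ∈ C : T(v) = 0} is a target set of G. -/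
open scoped Classical

/-- The neighborhood of `u` in `G`, as a finset. -/
noncomputable def nbrs {V : Type*} [Fintype V] (G : SimpleGraph V) (u : V) : Finset V :=
  Finset.univ.filter (fun w => G.Adj u w)

/-- The diffusion process: `diffusion G τ S i` is the set `A[S,i]` of vertices
active after `i` rounds starting from seed set `S`. -/
noncomputable def diffusion {V : Type*} [Fintype V] (G : SimpleGraph V) (τ : V → ℕ)
    (S : Finset V) : ℕ → Finset V
  | 0 => S
  | (i + 1) => diffusion G τ S i ∪
      Finset.univ.filter (fun u => τ u ≤ (nbrs G u ∩ diffusion G τ S i).card)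

/-- The influence of a seed set `S`: all vertices eventually activated. -/
def influence {V : Type*} [Fintype V] (G : SimpleGraph V) (τ : V → ℕ) (S : Finset V) : Set V :=
  {v | ∃ i, v ∈ diffusion G τ S i}

/-- `S` is a target set if its influence is the whole vertex set. -/
def isTargetSet {V : Type*} [Fintype V] (G : SimpleGraph V) (τ : V → ℕ) (S : Finset V) : Prop :=
  influence G τ S = Set.univ

/-- `C` is a vertex cover of `G`. -/
def isVertexCover {V : Type*} [Fintype V] (G : SimpleGraph V) (C : Finset V) : Prop :=
  ∀ u v, G.Adj u v → u ∈ C ∨ v ∈ C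

/-!
Call a neighbour `w` of `v` *earlier* if `T w < T v`. Every vertex of `B` has at least `τ`
earlier neighbours, by the choice of `T` on `B`; every vertex `v` of `C` has at least `τ v`
neighbours that are earlier or lie in `H`, since `H` supplies the `lᵢ` neighbours that are missing.
Hence, by strong induction on `T v`, every vertex is eventually activated by the seed set.
-/

open Finset

section Diffusion

variable {V : Type*} [Fintype V] (G : SimpleGraph V) (τ : V → ℕ) (S : Finset V)

theorem monotone_diffusion : Monotone (diffusion G τ S) :=
  monotone_nat_of_le_succ fun _ => subset_union_left

theorem subset_influence : ↑S ⊆ influence G τ S :=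
  fun _ hv => ⟨0, hv⟩

theorem exists_subset_diffusion_of_subset_influence {F : Finset V}
    (hF : ↑F ⊆ influence G τ S) : ∃ i, F ⊆ diffusion G τ S i := by
  have hmono : Monotone fun i => (diffusion G τ S i : Set V) :=
    fun _ _ hij => coe_subset.2 (monotone_diffusion G τ S hij)
  have hdir : Directed (· ⊆ ·) fun i => (diffusion G τ S i : Set V) := hmono.directed_le
  simpa using hdir.exists_mem_subset_of_finset_subset_biUnion
    (hF.trans fun v ⟨i, hi⟩ => Set.mem_iUnion.2 ⟨i, hi⟩)

theorem mem_influence_of_le_card {v : V}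
    (h : τ v ≤ ((nbrs G v).filter (· ∈ influence G τ S)).card) : v ∈ influence G τ S := by
  obtain ⟨i, hi⟩ := exists_subset_diffusion_of_subset_influence G τ S
    (F := (nbrs G v).filter (· ∈ influence G τ S)) fun _ hw => (mem_filter.1 hw).2
  refine ⟨i + 1, mem_union_right _ (mem_filter.2 ⟨mem_univ _, h.trans (card_le_card ?_)⟩)⟩
  exact subset_inter (filter_subset _ _) hi

theorem isTargetSet_of_le_card_filter_lt (T : V → ℕ)
    (h : ∀ v, v ∈ S ∨ τ v ≤ ((nbrs G v).filter (fun w => T w < T v ∨ w ∈ S)).card) :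
    isTargetSet G τ S := by
  rw [isTargetSet, Set.eq_univ_iff_forall]
  intro v
  induction hn : T v using Nat.strong_induction_on generalizing v with
  | _ n ih =>
    rcases h v with hvS | hv
    · exact subset_influence G τ S hvS
    · refine mem_influence_of_le_card G τ S (hv.trans (card_le_card fun w hw => ?_))
      rw [mem_filter] at hw ⊢
      exact ⟨hw.1, hw.2.elim (fun hlt => ih _ (hn ▸ hlt) w rfl) (subset_influence G τ S ·)⟩

end Diffusion

theorem Finset.le_card_filter_le_sInf {α : Type*} (s : Finset α) (f : α → ℕ) {k : ℕ}
    (hk : k ≤ s.card) :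
    k ≤ (s.filter fun a => f a ≤ sInf {x | k ≤ (s.filter fun a => f a ≤ x).card}).card := by
  refine Nat.sInf_mem (s := {x | k ≤ (s.filter fun a => f a ≤ x).card}) ⟨s.sup f, ?_⟩
  rwa [Set.mem_ofPred_eq, filter_true_of_mem fun _ ha => le_sup ha]

theorem multiHittingSet_gives_targetSet_general {V : Type*} [Fintype V] (G : SimpleGraph V) (τ : V → ℕ)
    (hτ : ∀ v, τ v ≤ (nbrs G v).card)
    (C : Finset V)
    (T : V → ℕ)
    (hTB : ∀ u ∉ C, T u = 1 + sInf {x | τ u ≤ ((nbrs G u).filter (fun c => T c ≤ x)).card})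
    (H : Finset V)
    (hhit : ∀ v ∈ C,
      τ v - ((nbrs G v).filter (fun w => T w < T v)).card ≤
        (H ∩ (nbrs G v).filter (fun w => w ∉ C ∧ T v ≤ T w)).card) :
    isTargetSet G τ (H ∪ C.filter (fun v => T v = 0)) := by
  refine isTargetSet_of_le_card_filter_lt G τ _ T fun v => Or.inr ?_
  by_cases hvC : v ∈ C
  · have hcount := hhit v hvC
    set earlier := (nbrs G v).filter (fun w => T w < T v)
    set hits := H ∩ (nbrs G v).filter (fun w => w ∉ C ∧ T v ≤ T w)
    have hdisj : Disjoint earlier hits := disjoint_left.2 fun w hw hw' =>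
      (mem_filter.1 (mem_inter.1 hw').2).2.2.not_gt (mem_filter.1 hw).2
    have hsub : earlier ∪ hits ⊆
        (nbrs G v).filter (fun w => T w < T v ∨ w ∈ H ∪ C.filter (fun v => T v = 0)) := by
      intro w hw
      rcases mem_union.1 hw with hw | hw
      · exact mem_filter.2 ⟨(mem_filter.1 hw).1, Or.inl (mem_filter.1 hw).2⟩
      · obtain ⟨hwH, hw⟩ := mem_inter.1 hw
        exact mem_filter.2 ⟨(mem_filter.1 hw).1, Or.inr (mem_union_left _ hwH)⟩
    calc τ v ≤ earlier.card + hits.card := by omega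
      _ = (earlier ∪ hits).card := (card_union_of_disjoint hdisj).symm
      _ ≤ _ := card_le_card hsub
  · refine ((nbrs G v).le_card_filter_le_sInf T (hτ v)).trans (card_le_card ?_)
    intro w hw
    rw [mem_filter] at hw ⊢
    exact ⟨hw.1, Or.inl (by rw [hTB v hvC]; omega)⟩

/-- If `H ⊆ B = V \ C` hits each set `Sᵢ` in at least `lᵢ` elements, then
`H ∪ {v ∈ C : T v = 0}` is a target set of `G`. -/
theorem multiHittingSet_gives_targetSet {V : Type*} [Fintype V] (G : SimpleGraph V) (τ : V → ℕ)
    (hτ : ∀ v, τ v ≤ (nbrs G v).card)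
    (C : Finset V) (hC : isVertexCover G C)
    (T : V → ℕ)
    (hTB : ∀ u ∉ C, T u = 1 + sInf {x | τ u ≤ ((nbrs G u).filter (fun c => T c ≤ x)).card})
    (H : Finset V) (hH : ∀ u ∈ H, u ∉ C)
    (hhit : ∀ v ∈ C,
      τ v - ((nbrs G v).filter (fun w => T w < T v)).card ≤
        (H ∩ (nbrs G v).filter (fun w => w ∉ C ∧ T v ≤ T w)).card) :
    isTargetSet G τ (H ∪ C.filter (fun v => T v = 0)) :=
  multiHittingSet_gives_targetSet_general G τ hτ C T hTB H hhit
end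

section
/- Let G be a finite simple bipartite graph with bipartition {V₁, V₂} in which every vertex has degree at least 1, and let τ : V(G) → ℕ be given by τ(v) = 1 for v ∈ V₁ and τ(v) = deg(v) for v ∈ V₂. Then for every target set S of G there exists a target set S′ of G with |S′| ≤ |S| such that S′ ⊆ V₂ and every vertex v ∈ V₁ has at least one neighbor in S′. -/
/-!
A vertex `v ∈ V₁` outside `S` with no neighbour in `S` can never be activated: it needs an
active neighbour, while each of its neighbours lies in `V₂` and needs all of its neighbours,
`v` among them, to be active first. So every target set `S` dominates `V₁ \ S`, and replacing
each vertex of `S ∩ V₁` by one of its neighbours gives `S' ⊆ V₂` dominating `V₁`, with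
`|S'| ≤ |S|`. Such an `S'` activates `V₁` in the first round and `V₂` in the second.
-/

open scoped Classical

open Finset

section Diffusion

variable {V : Type*} [Fintype V] {G : SimpleGraph V} {τ : V → ℕ} {S : Finset V}

lemma mem_nbrs {u w : V} : w ∈ nbrs G u ↔ G.Adj u w := by
  simp [nbrs]

lemma mem_diffusion_succ {u : V} {i : ℕ} :
    u ∈ diffusion G τ S (i + 1) ↔
      u ∈ diffusion G τ S i ∨ τ u ≤ (nbrs G u ∩ diffusion G τ S i).card := by
  simp [diffusion]

lemma isTargetSet_iff : isTargetSet G τ S ↔ ∀ v, ∃ i, v ∈ diffusion G τ S i := by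
  simp [isTargetSet, influence, Set.eq_univ_iff_forall]

lemma disjoint_diffusion_of_card_sdiff_lt {B : Finset V} (hSB : Disjoint S B)
    (hB : ∀ u ∈ B, (nbrs G u \ B).card < τ u) (i : ℕ) : Disjoint (diffusion G τ S i) B := by
  induction i with
  | zero => exact hSB
  | succ i ih =>
    refine disjoint_left.2 fun u hu huB => ?_
    rcases mem_diffusion_succ.1 hu with h | h
    · exact disjoint_left.1 ih h huB
    · have hle : (nbrs G u ∩ diffusion G τ S i).card ≤ (nbrs G u \ B).card :=
        card_le_card fun x hx =>
          mem_sdiff.2 ⟨(mem_inter.1 hx).1, disjoint_left.1 ih (mem_inter.1 hx).2⟩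
      exact absurd (hB u huB) (by omega)

lemma exists_adj_mem_of_isTargetSet (hS : isTargetSet G τ S) {v : V} (hv : 0 < τ v)
    (hnbr : ∀ w, G.Adj v w → (nbrs G w).card ≤ τ w) (hvS : v ∉ S) : ∃ w ∈ S, G.Adj v w := by
  by_contra! h
  have hSB : Disjoint S (insert v (nbrs G v)) := by
    refine disjoint_right.2 fun u hu huS => ?_
    rcases mem_insert.1 hu with rfl | hu
    · exact hvS huS
    · exact h u huS (mem_nbrs.1 hu)
  have hB : ∀ u ∈ insert v (nbrs G v), (nbrs G u \ insert v (nbrs G v)).card < τ u := by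
    intro u hu
    rcases mem_insert.1 hu with rfl | hu
    · rwa [sdiff_eq_empty_iff_subset.2 (subset_insert _ _), card_empty]
    · have hvu : v ∈ nbrs G u := mem_nbrs.2 (mem_nbrs.1 hu).symm
      calc (nbrs G u \ insert v (nbrs G v)).card
          ≤ ((nbrs G u).erase v).card :=
            card_le_card fun x hx => by
              simp only [mem_sdiff, mem_insert, not_or] at hx
              exact mem_erase.2 ⟨hx.2.1, hx.1⟩
        _ < (nbrs G u).card := card_erase_lt_of_mem hvu
        _ ≤ τ u := hnbr u (mem_nbrs.1 hu)
  obtain ⟨i, hi⟩ := isTargetSet_iff.1 hS v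
  exact disjoint_left.1 (disjoint_diffusion_of_card_sdiff_lt hSB hB i) hi (mem_insert_self _ _)

lemma isTargetSet_of_forall_adj_mem {V1 V2 : Finset V} (hunion : V1 ∪ V2 = univ)
    (hV2 : ∀ u ∈ V2, ∀ w, G.Adj u w → w ∈ V1)
    (hτ1 : ∀ v ∈ V1, τ v ≤ 1) (hτ2 : ∀ u ∈ V2, τ u ≤ (nbrs G u).card)
    (hdom : ∀ v ∈ V1, ∃ w ∈ S, G.Adj v w) : isTargetSet G τ S := by
  have hV1 : V1 ⊆ diffusion G τ S 1 := fun v hv => by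
    obtain ⟨w, hwS, hvw⟩ := hdom v hv
    have hpos : 0 < (nbrs G v ∩ diffusion G τ S 0).card :=
      card_pos.2 ⟨w, mem_inter.2 ⟨mem_nbrs.2 hvw, hwS⟩⟩
    exact mem_diffusion_succ.2 (Or.inr ((hτ1 v hv).trans hpos))
  refine isTargetSet_iff.2 fun v => ⟨2, ?_⟩
  rcases mem_union.1 (hunion ▸ mem_univ v) with hv | hv
  · exact mem_diffusion_succ.2 (Or.inl (hV1 hv))
  · have hall : nbrs G v ∩ diffusion G τ S 1 = nbrs G v :=
      inter_eq_left.2 fun w hw => hV1 (hV2 v hv w (mem_nbrs.1 hw))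
    exact mem_diffusion_succ.2 (Or.inr (by rw [hall]; exact hτ2 v hv))

end Diffusion

/-- In the bipartite setting with thresholds 1 on `V₁` and degree on `V₂`,
any target set `S` can be converted into a target set `S' ⊆ V₂` with
`|S'| ≤ |S|` dominating all of `V₁`. -/
theorem targetSet_normalize_bipartite {V : Type*} [Fintype V] (G : SimpleGraph V) (τ : V → ℕ)
    (V1 V2 : Finset V) (hdisj : Disjoint V1 V2) (hunion : V1 ∪ V2 = Finset.univ)
    (hbip : ∀ u v : V, G.Adj u v → (u ∈ V1 ∧ v ∈ V2) ∨ (u ∈ V2 ∧ v ∈ V1))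
    (hdeg : ∀ v : V, 1 ≤ (nbrs G v).card)
    (hτ1 : ∀ v ∈ V1, τ v = 1) (hτ2 : ∀ v ∈ V2, τ v = (nbrs G v).card)
    (S : Finset V) (hS : isTargetSet G τ S) :
    ∃ S' : Finset V, isTargetSet G τ S' ∧ S'.card ≤ S.card ∧ S' ⊆ V2 ∧
      ∀ v ∈ V1, ∃ w ∈ S', G.Adj v w := by
  have hV1 : ∀ v ∈ V1, ∀ w, G.Adj v w → w ∈ V2 := fun v hv w hvw =>
    (hbip v w hvw).elim And.right fun h => absurd hv (disjoint_right.1 hdisj h.1)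
  have hV2 : ∀ u ∈ V2, ∀ w, G.Adj u w → w ∈ V1 := fun u hu w huw =>
    (hbip u w huw).elim (fun h => absurd hu (disjoint_left.1 hdisj h.1)) And.right
  choose nb hnb using fun v => card_pos.1 (hdeg v)
  set S' := S.image fun v => if v ∈ V1 then nb v else v
  have hdom : ∀ v ∈ V1, ∃ w ∈ S', G.Adj v w := fun v hv => by
    by_cases hvS : v ∈ S
    · exact ⟨nb v, mem_image.2 ⟨v, hvS, if_pos hv⟩, mem_nbrs.1 (hnb v)⟩
    obtain ⟨w, hwS, hvw⟩ := exists_adj_mem_of_isTargetSet hS (by simp [hτ1 v hv])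
      (fun w hw => (hτ2 w (hV1 v hv w hw)).ge) hvS
    have hw : w ∉ V1 := disjoint_right.1 hdisj (hV1 v hv w hvw)
    exact ⟨w, mem_image.2 ⟨w, hwS, if_neg hw⟩, hvw⟩
  have hsub : S' ⊆ V2 := fun x hx => by
    obtain ⟨v, -, rfl⟩ := mem_image.1 hx
    split_ifs with hv
    · exact hV1 v hv _ (mem_nbrs.1 (hnb v))
    · exact (mem_union.1 (hunion ▸ mem_univ v)).resolve_left hv
  exact ⟨S', isTargetSet_of_forall_adj_mem hunion hV2 (fun v hv => (hτ1 v hv).le)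
    (fun u hu => (hτ2 u hu).le) hdom, card_image_le, hsub, hdom⟩
end
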